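/- arXiv:1803.08894 — 2 statements merged into one kernel-verified Lean document; each statement's English description precedes it below -/
import Mathlib

section
/- Let V be a finite-dimensional vector space over a field with dim V = r, and let α ∈ Λ^p(V*) be nonzero, where 1 ≤ p ≤ r. If dim{v ∈ V | i_v α = 0} = r − p, then α is totally decomposable: α = α_1 ∧ ... ∧ α_p for some α_1, ..., α_p ∈ V*. -/
/-!
The kernel `W = {v | i_v α = 0}` has codimension `p + 1`, so a complement `U` of it has dimension
`p + 1`. Since `α` vanishes as soon as one argument lies in `W`, expanding by multilinearity gives
`α v = α (π ∘ v)` for the projection `π` onto `U` along `W`. On the `(p + 1)`-dimensional space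
`U` the form `α` is a multiple `c` of the determinant in a basis `e`, so
`α v = c * det (e_i^* (π v_j))`, and the scalar `c` is absorbed into one of the functionals.
-/

namespace AlternatingMap

variable {R M N : Type*} [CommRing R] [AddCommGroup M] [Module R M] [AddCommGroup N] [Module R N]

theorem map_eq_zero_of_mem_ker_curryLeft {n : ℕ} (α : M [⋀^Fin (n + 1)]→ₗ[R] N)
    {v : Fin (n + 1) → M} {j : Fin (n + 1)} (hj : v j ∈ LinearMap.ker α.curryLeft) :
    α v = 0 := by
  have h₀ : ∀ w : Fin (n + 1) → M, w 0 ∈ LinearMap.ker α.curryLeft → α w = 0 := by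
    intro w hw
    rw [← Fin.cons_self_tail w, ← Matrix.vecCons, ← curryLeft_apply_apply, LinearMap.mem_ker.mp hw]
    rfl
  obtain rfl | hj₀ := eq_or_ne j 0
  · exact h₀ v hj
  · have := α.map_swap v hj₀.symm
    rw [h₀ _ (by simpa using hj)] at this
    exact neg_eq_zero.mp this.symm

theorem map_eq_of_forall_sub_mem {ι : Type*} [Fintype ι] (α : M [⋀^ι]→ₗ[R] N)
    (W : Submodule R M) (hW : ∀ (v : ι → M) (j : ι), v j ∈ W → α v = 0)
    {v w : ι → M} (hvw : ∀ i, v i - w i ∈ W) : α v = α w := by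
  classical
  -- in the expansion of `α (w + (v - w))` every term but `α w` has an argument in `W`
  rw [← add_sub_cancel w v, map_add_univ, Finset.sum_eq_single Finset.univ, Finset.piecewise_univ]
  · intro s _ hs
    obtain ⟨j, hj⟩ : ∃ j, j ∉ s := by simpa [Finset.eq_univ_iff_forall] using hs
    exact hW _ j (by simpa [Finset.piecewise_eq_of_notMem _ _ _ hj] using hvw j)
  · simp

end AlternatingMap

theorem Matrix.exists_det_dual_eq_mul_det {R M ι : Type*} [CommRing R] [AddCommGroup M]
    [Module R M] [Fintype ι] [DecidableEq ι] (i₀ : ι) (c : R) (g : ι → Module.Dual R M) :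
    ∃ f : ι → Module.Dual R M, ∀ v : ι → M,
      det (of fun i j => f i (v j)) = c * det (of fun i j => g i (v j)) := by
  refine ⟨Function.update g i₀ (c • g i₀), fun v => ?_⟩
  have : (of fun i j => Function.update g i₀ (c • g i₀) i (v j)) =
      (of fun i j => g i (v j)).updateRow i₀ (c • (of fun i j => g i (v j)) i₀) := by
    ext i j
    by_cases hi : i = i₀ <;> simp [hi]
  rw [this, det_updateRow_smul, updateRow_eq_self]

theorem decomposable_of_ker_dim_eq_general
    {K V : Type*} [Field K] [AddCommGroup V] [Module K V] [FiniteDimensional K V]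
    (p : ℕ) (hp : p + 1 ≤ Module.finrank K V)
    (α : V [⋀^Fin (p + 1)]→ₗ[K] K)
    (hker : Module.finrank K (LinearMap.ker α.curryLeft) =
      Module.finrank K V - (p + 1)) :
    ∃ f : Fin (p + 1) → Module.Dual K V,
      ∀ v : Fin (p + 1) → V, α v = Matrix.det (Matrix.of fun i j => f i (v j)) := by
  obtain ⟨U, hU⟩ := (LinearMap.ker α.curryLeft).exists_isCompl
  have hdimU : Module.finrank K U = p + 1 := by
    have := Submodule.finrank_add_eq_of_isCompl hU
    omega
  let b := Module.finBasisOfFinrankEq K U hdimU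
  let P := U.projectionOnto _ hU.symm
  let αU := α.compLinearMap U.subtype
  have hα : ∀ v, α v = αU (P ∘ v) := fun v =>
    α.map_eq_of_forall_sub_mem _ (fun _ _ => α.map_eq_zero_of_mem_ker_curryLeft)
      fun i => Submodule.sub_projection_mem hU.symm (v i)
  obtain ⟨f, hf⟩ := Matrix.exists_det_dual_eq_mul_det 0 (αU b) fun i => b.coord i ∘ₗ P
  refine ⟨f, fun v => ?_⟩
  rw [hf, hα]
  conv_lhs => rw [αU.eq_smul_basis_det b, AlternatingMap.smul_apply, smul_eq_mul, b.det_apply]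
  rfl

/-- A nonzero alternating `(p+1)`-form whose kernel `{v | i_v α = 0}` has dimension
`r - (p+1)` (where `r = dim V`) is totally decomposable: it is the wedge
`α_1 ∧ ... ∧ α_{p+1}` of `p+1` linear functionals, i.e. `α v = det (α_i (v_j))`. -/
theorem decomposable_of_ker_dim_eq
    {K V : Type*} [Field K] [AddCommGroup V] [Module K V] [FiniteDimensional K V]
    (p : ℕ) (hp : p + 1 ≤ Module.finrank K V)
    (α : V [⋀^Fin (p + 1)]→ₗ[K] K) (hne : α ≠ 0)
    (hker : Module.finrank K (LinearMap.ker α.curryLeft) =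
      Module.finrank K V - (p + 1)) :
    ∃ f : Fin (p + 1) → Module.Dual K V,
      ∀ v : Fin (p + 1) → V, α v = Matrix.det (Matrix.of fun i j => f i (v j)) :=
  decomposable_of_ker_dim_eq_general p hp α hker
end

section
/- Let V be a vector space over a field with basis v_1, ..., v_{p+1}, and let Ω = Σ_{j=1}^{p+1} a_j · v_1 ∧ ... ∧ v̂_j ∧ ... ∧ v_{p+1} ∈ Λ^p(V) with a_1 = 1 (the hat denotes omission). Then there exist vectors θ_2, ..., θ_{p+1}, with θ_j ∈ span{v_1, v_j} and θ_j − v_j a multiple of v_1 for each j, such that Ω = θ_2 ∧ θ_3 ∧ ... ∧ θ_{p+1}. -/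
/-!
Expand `θ_2 ∧ ⋯ ∧ θ_{p+1}` with `θ_j = v_j + c_j v_1` multilinearly: every term containing `v_1`
twice vanishes, leaving `v_2 ∧ ⋯ ∧ v_{p+1}` plus, for each `j`, the term `c_j` times the wedge with
`v_1` in place of `v_j`. A cyclic permutation moving `v_1` to the front turns the latter into
`±(v_1 ∧ ⋯ ∧ v̂_j ∧ ⋯ ∧ v_{p+1})`, so `c_j = ±a_j` matches the given coefficients.
-/

open Finset Function

theorem Finset.sum_finset_eq_empty_add_sum_singleton {ι M : Type*} [Fintype ι] [DecidableEq ι]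
    [AddCommMonoid M] (f : Finset ι → M) (hf : ∀ s, 1 < #s → f s = 0) :
    ∑ s, f s = f ∅ + ∑ i, f {i} := by
  have hsplit : ∀ s, f s = (if s = ∅ then f s else 0) + if #s = 1 then f s else 0 := by
    intro s
    obtain h | h | h : #s = 0 ∨ #s = 1 ∨ 1 < #s := by omega
    · simp [card_eq_zero.mp h]
    · simp [h, ← card_eq_zero]
    · simp [hf s h, h.ne']
  have hsingletons : ({s | #s = 1} : Finset (Finset ι)) = univ.map ⟨_, singleton_injective⟩ := by
    ext s; simp [card_eq_one, eq_comm]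
  rw [sum_congr rfl fun s _ => hsplit s, sum_add_distrib, sum_ite_eq', if_pos (mem_univ _),
    ← sum_filter, hsingletons, sum_map]
  rfl

namespace AlternatingMap

variable {R M N ι : Type*} [CommSemiring R] [AddCommMonoid M] [Module R M]
  [AddCommMonoid N] [Module R N]

theorem map_add_smul_const [Fintype ι] [DecidableEq ι] (F : M [⋀^ι]→ₗ[R] N) (m : ι → M)
    (c : ι → R) (u : M) :
    F (fun i => m i + c i • u) = F m + ∑ k, c k • F (update m k u) := by
  have hsum : (fun i => m i + c i • u) = (fun i => c i • u) + m := by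
    ext i; exact add_comm _ _
  rw [hsum, F.map_add_univ, sum_finset_eq_empty_add_sum_singleton]
  · simp only [piecewise_empty, piecewise_singleton, F.map_update_smul]
  intro s hs
  obtain ⟨i, hi, j, hj, hij⟩ := one_lt_card.mp hs
  have hu : s.piecewise (fun i => c i • u) m =
      s.piecewise (fun i => c i • s.piecewise (fun _ => u) m i) (s.piecewise (fun _ => u) m) := by
    ext k; by_cases hk : k ∈ s <;> simp [hk]
  rw [hu, ← F.coe_multilinearMap, MultilinearMap.map_piecewise_smul]
  exact smul_eq_zero_of_right _ (F.map_eq_zero_of_eq _ (by simp [hi, hj]) hij)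

section Ring

variable {R M N : Type*} [CommRing R] [AddCommGroup M] [Module R M] [AddCommGroup N] [Module R N]
  {p : ℕ}

theorem map_update_succ_zero (F : M [⋀^Fin p]→ₗ[R] N) (v : Fin (p + 1) → M) (k : Fin p) :
    F (update (fun i => v i.succ) k (v 0)) =
      (-1 : R) ^ (k : ℕ) • F (fun i => v (k.succ.succAbove i)) := by
  have hperm : update (fun i => v i.succ) k (v 0) =
      (fun i => v (k.succ.succAbove i)) ∘ Fin.cycleRange k := by
    ext x
    rw [comp_apply, Fin.succAbove_cycleRange]
    rcases eq_or_ne x k with rfl | hx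
    · simp
    · rw [update_of_ne hx, Equiv.swap_apply_of_ne_of_ne (Fin.succ_ne_zero x)
        (Fin.succ_injective _ |>.ne hx)]
  rw [hperm, F.map_perm, Fin.sign_cycleRange, Units.smul_def, ← Int.cast_smul_eq_zsmul R]
  simp

theorem sum_smul_map_succAbove_eq_map_add_smul (F : M [⋀^Fin p]→ₗ[R] N) (v : Fin (p + 1) → M)
    (a : Fin (p + 1) → R) (ha : a 0 = 1) :
    ∑ j, a j • F (fun i => v (j.succAbove i)) =
      F (fun i => v i.succ + ((-1) ^ (i : ℕ) * a i.succ) • v 0) := by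
  rw [map_add_smul_const, Fin.sum_univ_succ, ha, one_smul]
  simp only [Fin.succAbove_zero, map_update_succ_zero, smul_smul]
  congr 1
  refine sum_congr rfl fun k _ => ?_
  rw [mul_right_comm, ← mul_pow, neg_one_mul, neg_neg, one_pow, one_mul]

end Ring

end AlternatingMap

/-- If `Ω = Σ_j a_j v_1 ∧ ... ∧ v̂_j ∧ ... ∧ v_{p+1}` with `a_1 = 1`, then `Ω` is the
wedge of the vectors `θ_j = v_j + c_j v_1` for suitable scalars `c_j`. -/
theorem decomposition_of_codim_one_multivector
    {K V : Type*} [Field K] [AddCommGroup V] [Module K V]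
    (p : ℕ) (b : Module.Basis (Fin (p + 1)) K V) (a : Fin (p + 1) → K) (ha : a 0 = 1) :
    ∃ c : Fin p → K,
      (∑ j : Fin (p + 1),
          a j • ExteriorAlgebra.ιMulti K p (fun i => b (j.succAbove i))) =
        ExteriorAlgebra.ιMulti K p (fun i => b i.succ + c i • b 0) :=
  ⟨_, (ExteriorAlgebra.ιMulti K p).sum_smul_map_succAbove_eq_map_add_smul b a ha⟩
end
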